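/- arXiv:1505.02558 — 8 statements merged into one kernel-verified Lean document; each statement's English description precedes it below -/
import Mathlib

section
/- In any feasible complete coloring of a graph G, if two triangles of G share exactly one vertex, then that shared vertex is white. -/
def FeasibleColoring {V : Type*} (G : SimpleGraph V) (c : V → Bool) : Prop :=
  (∀ u v : V, G.Adj u v → c u = true ∨ c v = true) ∧
  (∀ v : V, c v = true → ∃! w : V, G.Adj v w ∧ c w = true)

theorem stmt_5 {V : Type*} (G : SimpleGraph V) (c : V → Bool)
    (hfeas : FeasibleColoring G c) (a b₁ c₁ b₂ c₂ : V)
    (hT1 : G.Adj a b₁ ∧ G.Adj a c₁ ∧ G.Adj b₁ c₁)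
    (hT2 : G.Adj a b₂ ∧ G.Adj a c₂ ∧ G.Adj b₂ c₂)
    (hdisj : b₁ ≠ b₂ ∧ b₁ ≠ c₂ ∧ c₁ ≠ b₂ ∧ c₁ ≠ c₂) :
    c a = false := by
  by_contra h
  have ha : c a = true := by simpa using h
  obtain ⟨w, -, huniq⟩ := hfeas.2 a ha
  obtain ⟨x, hx, hxc, hxne⟩ :
      ∃ x, G.Adj a x ∧ c x = true ∧ (x = b₁ ∨ x = c₁) := by
    rcases hfeas.1 b₁ c₁ hT1.2.2 with h1 | h1
    · exact ⟨b₁, hT1.1, h1, Or.inl rfl⟩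
    · exact ⟨c₁, hT1.2.1, h1, Or.inr rfl⟩
  obtain ⟨y, hy, hyc, hyne⟩ :
      ∃ y, G.Adj a y ∧ c y = true ∧ (y = b₂ ∨ y = c₂) := by
    rcases hfeas.1 b₂ c₂ hT2.2.2 with h1 | h1
    · exact ⟨b₂, hT2.1, h1, Or.inl rfl⟩
    · exact ⟨c₂, hT2.2.1, h1, Or.inr rfl⟩
  have hxw := huniq x ⟨hx, hxc⟩
  have hyw := huniq y ⟨hy, hyc⟩
  have : x = y := hxw.trans hyw.symm
  obtain ⟨h1, h2, h3, h4⟩ := hdisj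
  rcases hxne with rfl | rfl <;> rcases hyne with rfl | rfl <;> simp_all
end

section
/- In any feasible complete coloring of a graph G, if two distinct triangles of G share exactly two vertices (i.e., G contains an induced or non-induced diamond), then both shared vertices are black. -/
theorem stmt_6 {V : Type*} (G : SimpleGraph V) (col : V → Bool)
    (hfeas : FeasibleColoring G col) (a b x y : V)
    (hT1 : G.Adj a b ∧ G.Adj a x ∧ G.Adj b x)
    (hT2 : G.Adj a y ∧ G.Adj b y)
    (hxy : x ≠ y) :
    col a = true ∧ col b = true := by
  obtain ⟨hI, hU⟩ := hfeas
  obtain ⟨hab, hax, hbx⟩ := hT1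
  obtain ⟨hay, hby⟩ := hT2
  constructor
  · by_contra ha
    simp only [Bool.not_eq_true] at ha
    have hb : col b = true := (hI a b hab).resolve_left (by simp [ha])
    have hx : col x = true := (hI a x hax).resolve_left (by simp [ha])
    have hy : col y = true := (hI a y hay).resolve_left (by simp [ha])
    obtain ⟨w, _, huniq⟩ := hU b hb
    exact hxy ((huniq x ⟨hbx, hx⟩).trans (huniq y ⟨hby, hy⟩).symm)
  · by_contra hb
    simp only [Bool.not_eq_true] at hb
    have ha : col a = true := (hI a b hab).resolve_right (by simp [hb])
    have hx : col x = true := (hI b x hbx).resolve_left (by simp [hb])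
    have hy : col y = true := (hI b y hby).resolve_left (by simp [hb])
    obtain ⟨w, _, huniq⟩ := hU a ha
    exact hxy ((huniq x ⟨hax, hx⟩).trans (huniq y ⟨hay, hy⟩).symm)
end

section
/- In any feasible complete coloring of a graph G, if v1, v2, v3, v4 is an induced path (edges v1v2, v2v3, v3v4 only), the degree of v3 in G is 2, and v1 is black, then v4 is black. -/
theorem stmt_8 {V : Type*} (G : SimpleGraph V) (c : V → Bool)
    (hfeas : FeasibleColoring G c) (v1 v2 v3 v4 : V)
    (h12 : G.Adj v1 v2) (h23 : G.Adj v2 v3) (h34 : G.Adj v3 v4)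
    (h13 : ¬ G.Adj v1 v3) (h14 : ¬ G.Adj v1 v4) (h24 : ¬ G.Adj v2 v4)
    (hdeg : ∀ w : V, G.Adj v3 w → w = v2 ∨ w = v4)
    (hv1 : c v1 = true) :
    c v4 = true := by
  obtain ⟨hdom, huniq⟩ := hfeas
  by_contra hv4
  have hv4' : c v4 ≠ true := hv4
  have hv3 : c v3 = true := (hdom v3 v4 h34).resolve_right hv4'
  obtain ⟨w, ⟨hw1, hw2⟩, hwu⟩ := huniq v3 hv3
  have hw : w = v2 := by
    rcases hdeg w hw1 with h | h
    · exact h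
    · exact absurd (h ▸ hw2) hv4'
  have hv2 : c v2 = true := hw ▸ hw2
  obtain ⟨u, hu, huu⟩ := huniq v2 hv2
  have e1 : v1 = u := huu v1 ⟨h12.symm, hv1⟩
  have e3 : v3 = u := huu v3 ⟨h23, hv3⟩
  exact h14 ((e1.trans e3.symm) ▸ h34)
end

section
/- Let G be an S_{2,2,2}-free graph admitting a feasible complete coloring, and let v be a vertex such that the subgraph induced by the neighborhood N(v) contains three vertices that are pairwise non-adjacent and have no neighbors inside N(v). Then v is colored black in every feasible complete coloring of G. -/
def LongClawFree {V : Type*} (G : SimpleGraph V) : Prop :=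
  ¬ ∃ c0 m1 m2 m3 l1 l2 l3 : V,
    List.Pairwise (· ≠ ·) [c0, m1, m2, m3, l1, l2, l3] ∧
    G.Adj c0 m1 ∧ G.Adj c0 m2 ∧ G.Adj c0 m3 ∧
    G.Adj m1 l1 ∧ G.Adj m2 l2 ∧ G.Adj m3 l3 ∧
    ¬ G.Adj m1 m2 ∧ ¬ G.Adj m1 m3 ∧ ¬ G.Adj m2 m3 ∧
    ¬ G.Adj c0 l1 ∧ ¬ G.Adj c0 l2 ∧ ¬ G.Adj c0 l3 ∧
    ¬ G.Adj m1 l2 ∧ ¬ G.Adj m1 l3 ∧ ¬ G.Adj m2 l1 ∧ ¬ G.Adj m2 l3 ∧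
    ¬ G.Adj m3 l1 ∧ ¬ G.Adj m3 l2 ∧
    ¬ G.Adj l1 l2 ∧ ¬ G.Adj l1 l3 ∧ ¬ G.Adj l2 l3

theorem stmt_10 {V : Type*} (G : SimpleGraph V) (hfree : LongClawFree G)
    (hex : ∃ c : V → Bool, FeasibleColoring G c)
    (v x y z : V)
    (hx : G.Adj v x) (hy : G.Adj v y) (hz : G.Adj v z)
    (hxy : x ≠ y) (hxz : x ≠ z) (hyz : y ≠ z)
    (hxN : ∀ w : V, G.Adj v w → ¬ G.Adj x w)
    (hyN : ∀ w : V, G.Adj v w → ¬ G.Adj y w)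
    (hzN : ∀ w : V, G.Adj v w → ¬ G.Adj z w) :
    ∀ c : V → Bool, FeasibleColoring G c → c v = true := by
  rintro c ⟨h1, h2⟩
  by_contra hv
  -- x, y, z are black
  have cx : c x = true := (h1 v x hx).resolve_left hv
  have cy : c y = true := (h1 v y hy).resolve_left hv
  have cz : c z = true := (h1 v z hz).resolve_left hv
  -- key: no white-or-black vertex w can be a black neighbor of two distinct black vertices
  have key : ∀ a b w : V, c a = true → c b = true → a ≠ b →
      G.Adj a w → G.Adj b w → c w = true → False := by
    intro a b w ca cb hab haw hbw cw
    obtain ⟨u, -, hu⟩ := h2 w cw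
    exact hab ((hu a ⟨haw.symm, ca⟩).trans (hu b ⟨hbw.symm, cb⟩).symm)
  -- black partners
  obtain ⟨x', ⟨hxx', cx'⟩, -⟩ := h2 x cx
  obtain ⟨y', ⟨hyy', cy'⟩, -⟩ := h2 y cy
  obtain ⟨z', ⟨hzz', cz'⟩, -⟩ := h2 z cz
  -- non-adjacencies among x,y,z
  have nxy : ¬ G.Adj x y := hxN y hy
  have nxz : ¬ G.Adj x z := hxN z hz
  have nyz : ¬ G.Adj y z := hyN z hz
  -- leaves are not adjacent to v
  have nvx' : ¬ G.Adj v x' := fun h => hxN x' h hxx'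
  have nvy' : ¬ G.Adj v y' := fun h => hyN y' h hyy'
  have nvz' : ¬ G.Adj v z' := fun h => hzN z' h hzz'
  -- cross non-adjacencies middle-leaf
  have nxy' : ¬ G.Adj x y' := fun h => key x y y' cx cy hxy h hyy' cy'
  have nxz' : ¬ G.Adj x z' := fun h => key x z z' cx cz hxz h hzz' cz'
  have nyx' : ¬ G.Adj y x' := fun h => key y x x' cy cx hxy.symm h hxx' cx'
  have nyz' : ¬ G.Adj y z' := fun h => key y z z' cy cz hyz h hzz' cz'
  have nzx' : ¬ G.Adj z x' := fun h => key z x x' cz cx hxz.symm h hxx' cx'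
  have nzy' : ¬ G.Adj z y' := fun h => key z y y' cz cy hyz.symm h hyy' cy'
  -- distinctness
  have cvf : c v = false := by cases hcv : c v with
    | false => rfl
    | true => exact absurd hcv hv
  have vx : v ≠ x := G.ne_of_adj hx
  have vy : v ≠ y := G.ne_of_adj hy
  have vz : v ≠ z := G.ne_of_adj hz
  have vx' : v ≠ x' := fun e => by rw [e, cx'] at cvf; exact Bool.noConfusion cvf
  have vy' : v ≠ y' := fun e => by rw [e, cy'] at cvf; exact Bool.noConfusion cvf
  have vz' : v ≠ z' := fun e => by rw [e, cz'] at cvf; exact Bool.noConfusion cvf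
  have xx' : x ≠ x' := G.ne_of_adj hxx'
  have yy' : y ≠ y' := G.ne_of_adj hyy'
  have zz' : z ≠ z' := G.ne_of_adj hzz'
  have xy' : x ≠ y' := fun e => nxy (e ▸ hyy').symm
  have xz' : x ≠ z' := fun e => nxz (e ▸ hzz').symm
  have yx' : y ≠ x' := fun e => nxy (e ▸ hxx')
  have yz' : y ≠ z' := fun e => nyz (e ▸ hzz').symm
  have zx' : z ≠ x' := fun e => nxz (e ▸ hxx')
  have zy' : z ≠ y' := fun e => nyz (e ▸ hyy')
  have x'y' : x' ≠ y' := fun e => key x y x' cx cy hxy hxx' (e ▸ hyy') cx'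
  have x'z' : x' ≠ z' := fun e => key x z x' cx cz hxz hxx' (e ▸ hzz') cx'
  have y'z' : y' ≠ z' := fun e => key y z y' cy cz hyz hyy' (e ▸ hzz') cy'
  have nx'y' : ¬ G.Adj x' y' := fun h => key x y' x' cx cy' xy' hxx' h.symm cx'
  have nx'z' : ¬ G.Adj x' z' := fun h => key x z' x' cx cz' xz' hxx' h.symm cx'
  have ny'z' : ¬ G.Adj y' z' := fun h => key y z' y' cy cz' yz' hyy' h.symm cy'
  exact hfree ⟨v, x, y, z, x', y', z', by
    simp only [List.pairwise_cons, List.mem_cons, List.not_mem_nil, or_false,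
      forall_eq_or_imp, forall_eq, List.Pairwise.nil, and_true, ne_eq]
    exact ⟨⟨vx, vy, vz, vx', vy', vz'⟩, ⟨hxy, hxz, xx', xy', xz'⟩,
      ⟨hyz, yx', yy', yz'⟩, ⟨zx', zy', zz'⟩, ⟨x'y', x'z'⟩, y'z', fun _ h => h.elim⟩, hx, hy, hz, hxx', hyy', hzz', nxy, nxz, nyz, nvx', nvy', nvz',
    nxy', nxz', nyx', nyz', nzx', nzy', nx'y', nx'z', ny'z'⟩
end

section
/- Let G be a graph and T1, T2 two vertex-disjoint triangles in G such that G admits a feasible complete coloring in which the edges between T1 and T2 all join vertices of different colors. If every vertex of G belongs to at most one triangle, then there are at most two edges between T1 and T2, and if there are exactly two, they are vertex-disjoint (non-adjacent). -/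
lemma tri_adj_aux {V : Type*} (G : SimpleGraph V) {a b c : V}
    (hab : G.Adj a b) (hac : G.Adj a c) (hbc : G.Adj b c) :
    ∀ x y, x ∈ ({a, b, c} : Set V) → y ∈ ({a, b, c} : Set V) → x ≠ y → G.Adj x y := by
  intro x y hx hy hne
  simp only [Set.mem_insert_iff, Set.mem_singleton_iff] at hx hy
  rcases hx with rfl | rfl | rfl <;> rcases hy with rfl | rfl | rfl <;>
    first
      | exact absurd rfl hne
      | assumption
      | exact hab.symm
      | exact hac.symm
      | exact hbc.symm

lemma no_cross_tri_aux {V : Type*} (G : SimpleGraph V) {a b c : V} {S : Set V}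
    (hab : G.Adj a b) (hac : G.Adj a c) (hbc : G.Adj b c)
    (hdisj : Disjoint ({a, b, c} : Set V) S)
    (honeTri : ∀ v x y x' y' : V,
      G.Adj v x → G.Adj v y → G.Adj x y →
      G.Adj v x' → G.Adj v y' → G.Adj x' y' →
      ({x, y} : Set V) = {x', y'}) :
    ∀ u x y, u ∈ ({a, b, c} : Set V) → x ∈ S → y ∈ S →
      G.Adj u x → G.Adj u y → G.Adj x y → False := by
  intro u x y hu hx hy hux huy hxy
  have key : ∀ p q : V, G.Adj u p → G.Adj u q → G.Adj p q →
      p ∈ ({a, b, c} : Set V) → False := by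
    intro p q hup huq hpq hp
    have heq := honeTri u p q x y hup huq hpq hux huy hxy
    have hpmem : p ∈ ({x, y} : Set V) := by
      rw [← heq]; exact Set.mem_insert _ _
    rcases hpmem with h | h
    · exact Set.disjoint_left.mp hdisj hp (h ▸ hx)
    · exact Set.disjoint_left.mp hdisj hp ((Set.mem_singleton_iff.mp h) ▸ hy)
  simp only [Set.mem_insert_iff, Set.mem_singleton_iff] at hu
  rcases hu with rfl | rfl | rfl
  · exact key b c hab hac hbc (by simp)
  · exact key a c hab.symm hbc hac (by simp)
  · exact key a b hac.symm hbc.symm hab (by simp)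

theorem stmt_13 {V : Type*} (G : SimpleGraph V) (col : V → Bool)
    (hfeas : FeasibleColoring G col)
    (a1 b1 c1 a2 b2 c2 : V)
    (hT1 : G.Adj a1 b1 ∧ G.Adj a1 c1 ∧ G.Adj b1 c1)
    (hT2 : G.Adj a2 b2 ∧ G.Adj a2 c2 ∧ G.Adj b2 c2)
    (hdisj : Disjoint ({a1, b1, c1} : Set V) ({a2, b2, c2} : Set V))
    (hcross : ∀ u w : V, u ∈ ({a1, b1, c1} : Set V) → w ∈ ({a2, b2, c2} : Set V) →
      G.Adj u w → col u ≠ col w)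
    (honeTri : ∀ v x y x' y' : V,
      G.Adj v x → G.Adj v y → G.Adj x y →
      G.Adj v x' → G.Adj v y' → G.Adj x' y' →
      ({x, y} : Set V) = {x', y'}) :
    ({p : V × V | p.1 ∈ ({a1, b1, c1} : Set V) ∧ p.2 ∈ ({a2, b2, c2} : Set V) ∧
        G.Adj p.1 p.2}).ncard ≤ 2 ∧
    (∀ p q : V × V,
      p.1 ∈ ({a1, b1, c1} : Set V) → p.2 ∈ ({a2, b2, c2} : Set V) → G.Adj p.1 p.2 →
      q.1 ∈ ({a1, b1, c1} : Set V) → q.2 ∈ ({a2, b2, c2} : Set V) → G.Adj q.1 q.2 →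
      p ≠ q → p.1 ≠ q.1 ∧ p.2 ≠ q.2) := by
  obtain ⟨hind, huniq⟩ := hfeas
  obtain ⟨hab1, hac1, hbc1⟩ := hT1
  obtain ⟨hab2, hac2, hbc2⟩ := hT2
  have adj1 := tri_adj_aux G hab1 hac1 hbc1
  have adj2 := tri_adj_aux G hab2 hac2 hbc2
  have noct1 := no_cross_tri_aux G hab1 hac1 hbc1 hdisj honeTri
  have noct2 := no_cross_tri_aux G hab2 hac2 hbc2 hdisj.symm honeTri
  have part2 : ∀ p q : V × V,
      p.1 ∈ ({a1, b1, c1} : Set V) → p.2 ∈ ({a2, b2, c2} : Set V) → G.Adj p.1 p.2 →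
      q.1 ∈ ({a1, b1, c1} : Set V) → q.2 ∈ ({a2, b2, c2} : Set V) → G.Adj q.1 q.2 →
      p ≠ q → p.1 ≠ q.1 ∧ p.2 ≠ q.2 := by
    intro p q hp1 hp2 hpadj hq1 hq2 hqadj hpq
    have cp := hcross _ _ hp1 hp2 hpadj
    have cq := hcross _ _ hq1 hq2 hqadj
    constructor
    · intro h1
      have h2 : p.2 ≠ q.2 := fun h2 => hpq (Prod.ext h1 h2)
      have hxy : G.Adj p.2 q.2 := adj2 _ _ hp2 hq2 h2
      cases hcol : col p.1 with
      | false =>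
        exact noct1 p.1 p.2 q.2 hp1 hp2 hq2 hpadj (h1 ▸ hqadj) hxy
      | true =>
        have hx : col p.2 = false := by
          cases h : col p.2
          · rfl
          · exact absurd (hcol.trans h.symm) cp
        have hy : col q.2 = false := by
          cases h : col q.2
          · rfl
          · exact absurd ((h1 ▸ hcol).trans h.symm) cq
        rcases hind _ _ hxy with h | h
        · exact absurd h (by simp [hx])
        · exact absurd h (by simp [hy])
    · intro h2
      have h1 : p.1 ≠ q.1 := fun h1 => hpq (Prod.ext h1 h2)
      have hxy : G.Adj p.1 q.1 := adj1 _ _ hp1 hq1 h1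
      cases hcol : col p.2 with
      | false =>
        exact noct2 p.2 p.1 q.1 hp2 hp1 hq1 hpadj.symm (h2 ▸ hqadj.symm) hxy
      | true =>
        have hx : col p.1 = false := by
          cases h : col p.1
          · rfl
          · exact absurd (h.trans hcol.symm) cp
        have hy : col q.1 = false := by
          cases h : col q.1
          · rfl
          · exact absurd (h.trans (h2 ▸ hcol).symm) cq
        rcases hind _ _ hxy with h | h
        · exact absurd h (by simp [hx])
        · exact absurd h (by simp [hy])
  refine ⟨?_, part2⟩
  set S : Set (V × V) := {p : V × V | p.1 ∈ ({a1, b1, c1} : Set V) ∧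
      p.2 ∈ ({a2, b2, c2} : Set V) ∧ G.Adj p.1 p.2} with hS
  have hsub : S ⊆ {p ∈ S | col p.1 = false} ∪ {p ∈ S | col p.1 = true} := by
    intro p hp
    cases h : col p.1
    · exact Or.inl ⟨hp, h⟩
    · exact Or.inr ⟨hp, h⟩
  have heqpq : ∀ p q : V × V, p ∈ S → q ∈ S → p.1 = q.1 ∨ p.2 = q.2 → p = q := by
    intro p q hp hq hor
    by_contra hne
    have := part2 p q hp.1 hp.2.1 hp.2.2 hq.1 hq.2.1 hq.2.2 hne
    rcases hor with h | h
    · exact this.1 h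
    · exact this.2 h
  have hss1 : ({p ∈ S | col p.1 = false}).Subsingleton := by
    intro p hp q hq
    refine heqpq p q hp.1 hq.1 (Or.inl ?_)
    by_contra h1
    have hadj : G.Adj p.1 q.1 := adj1 _ _ hp.1.1 hq.1.1 h1
    rcases hind _ _ hadj with h | h
    · exact absurd h (by simp [hp.2])
    · exact absurd h (by simp [hq.2])
  have hss2 : ({p ∈ S | col p.1 = true}).Subsingleton := by
    intro p hp q hq
    refine heqpq p q hp.1 hq.1 (Or.inr ?_)
    by_contra h2
    have hadj : G.Adj p.2 q.2 := adj2 _ _ hp.1.2.1 hq.1.2.1 h2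
    have hx : col p.2 = false := by
      have := hcross _ _ hp.1.1 hp.1.2.1 hp.1.2.2
      cases h : col p.2
      · rfl
      · exact absurd (hp.2.trans h.symm) this
    have hy : col q.2 = false := by
      have := hcross _ _ hq.1.1 hq.1.2.1 hq.1.2.2
      cases h : col q.2
      · rfl
      · exact absurd (hq.2.trans h.symm) this
    rcases hind _ _ hadj with h | h
    · exact absurd h (by simp [hx])
    · exact absurd h (by simp [hy])
  have hle1 : ∀ T : Set (V × V), T.Subsingleton → T.ncard ≤ 1 := by
    intro T hT
    rcases hT.eq_empty_or_singleton with rfl | ⟨x, rfl⟩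
    · simp
    · simp
  calc S.ncard ≤ ({p ∈ S | col p.1 = false} ∪ {p ∈ S | col p.1 = true}).ncard := by
        exact Set.ncard_le_ncard hsub ((hss1.finite).union (hss2.finite))
    _ ≤ ({p ∈ S | col p.1 = false}).ncard + ({p ∈ S | col p.1 = true}).ncard :=
        Set.ncard_union_le _ _
    _ ≤ 2 := by
        have := hle1 _ hss1
        have := hle1 _ hss2
        omega
end

section
/- Let G be a graph, U a set of vertices, M a maximum matching of G saturating U, and M' a maximum matching of G leaving some vertex v ∈ U unsaturated. Then there exists an alternating path with respect to M' of even length starting at v with an edge not in M' and ending with an edge of M' at a vertex w not in U. -/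
/-!
Grow a path backwards from `v` whose edges alternate between `M` and `M'`: from its current
end `x ∈ U` append the `M`-edge `xy` and then the `M'`-edge `yz`. Neither `y` nor `z` lies on the
path, because every vertex on it is already matched along the path. The `M'`-edge at `y` exists:
otherwise `y x ⋯ v` is an `M'`-augmenting path, and flipping it yields a larger matching.
Since paths in a finite graph are bounded in length, the growth stops at some `z ∉ U`.
-/

namespace SimpleGraph

variable {V : Type*} {G : SimpleGraph V}

namespace Subgraph

variable {M : G.Subgraph} {a b c d : V}

lemma IsMatching.sup_subgraphOfAdj (hM : M.IsMatching) (hab : G.Adj a b) (ha : a ∉ M.verts)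
    (hb : b ∉ M.verts) : (M ⊔ G.subgraphOfAdj hab).IsMatching := by
  refine hM.sup (.subgraphOfAdj hab) (Set.disjoint_left.2 fun c hc hc' => ?_)
  rw [support_subgraphOfAdj] at hc'
  rcases hc' with rfl | rfl
  exacts [ha (M.support_subset_verts hc), hb (M.support_subset_verts hc)]

lemma ncard_edgeSet_sup_subgraphOfAdj [Finite V] (hab : G.Adj a b) (ha : a ∉ M.verts) :
    (M ⊔ G.subgraphOfAdj hab).edgeSet.ncard = M.edgeSet.ncard + 1 := by
  rw [edgeSet_sup, edgeSet_subgraphOfAdj, Set.union_singleton, Set.ncard_insert_of_notMem]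
  exact fun h => ha (M.edge_vert h)

lemma IsMatching.deleteVerts_adj_of_adj (hM : M.IsMatching) (hab : M.Adj a b) (hcd : M.Adj c d)
    (hca : c ≠ a) (hda : d ≠ a) : (M.deleteVerts {a, b}).Adj c d := by
  have hcb : c ≠ b := fun h => hda (hM.eq_of_adj_left (h ▸ hcd) hab.symm)
  have hdb : d ≠ b := fun h => hca (hM.eq_of_adj_right (h ▸ hcd) hab)
  simp [hcd, hcd.fst_mem, hcd.snd_mem, hca, hcb, hda, hdb]

lemma IsMatching.deleteVerts_pair (hM : M.IsMatching) (hab : M.Adj a b) :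
    (M.deleteVerts {a, b}).IsMatching := by
  rintro c ⟨hc, hcab⟩
  obtain ⟨d, hcd, hd⟩ := hM hc
  have hca : c ≠ a := fun h => hcab (.inl h)
  have hda : d ≠ a := fun h => hcab (.inr (hM.eq_of_adj_right (h ▸ hcd) hab.symm))
  exact ⟨d, hM.deleteVerts_adj_of_adj hab hcd hca hda, fun d' hd' => hd d' (deleteVerts_le.2 hd')⟩

lemma ncard_edgeSet_deleteVerts_pair [Finite V] (hM : M.IsMatching) (hab : M.Adj a b) :
    (M.deleteVerts {a, b}).edgeSet.ncard + 1 = M.edgeSet.ncard := by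
  have hedges : M.edgeSet = insert s(a, b) (M.deleteVerts {a, b}).edgeSet := by
    ext e
    induction e using Sym2.ind with
    | _ c d =>
      refine ⟨fun (hcd : M.Adj c d) => ?_, ?_⟩
      · by_cases hca : c = a
        · subst hca; exact .inl (by rw [hM.eq_of_adj_left hcd hab])
        by_cases hda : d = a
        · subst hda; exact .inl (by rw [hM.eq_of_adj_right hcd hab.symm, Sym2.eq_swap])
        exact .inr (hM.deleteVerts_adj_of_adj hab hcd hca hda)
      · rintro (he | he)
        · rw [he]; exact hab
        · exact deleteVerts_le.2 he
  rw [hedges, Set.ncard_insert_of_notMem]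
  intro h
  simp at h

lemma IsMatching.deleteVerts_pair_sup_subgraphOfAdj (hM : M.IsMatching) (hab : M.Adj a b)
    (hca : G.Adj c a) (hc : c ∉ M.verts) :
    (M.deleteVerts {a, b} ⊔ G.subgraphOfAdj hca).IsMatching :=
  (hM.deleteVerts_pair hab).sup_subgraphOfAdj hca (fun h => hc (Set.sdiff_subset h))
    (fun h => Set.notMem_of_mem_sdiff h (.inl rfl))

lemma ncard_edgeSet_deleteVerts_pair_sup_subgraphOfAdj [Finite V] (hM : M.IsMatching)
    (hab : M.Adj a b) (hca : G.Adj c a) (hc : c ∉ M.verts) :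
    (M.deleteVerts {a, b} ⊔ G.subgraphOfAdj hca).edgeSet.ncard = M.edgeSet.ncard := by
  rw [ncard_edgeSet_sup_subgraphOfAdj hca (fun h => hc (Set.sdiff_subset h)),
    ncard_edgeSet_deleteVerts_pair hM hab]

lemma IsMatching.deleteVerts_pair_sup_subgraphOfAdj_adj_iff (hM : M.IsMatching)
    (hab : M.Adj a b) (hca : G.Adj c a) {w w' : V} (hwa : w ≠ a) (hw'a : w' ≠ a) (hwc : w ≠ c)
    (hw'c : w' ≠ c) : (M.deleteVerts {a, b} ⊔ G.subgraphOfAdj hca).Adj w w' ↔ M.Adj w w' := by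
  refine ⟨fun h => ?_, fun h => .inl (hM.deleteVerts_adj_of_adj hab h hwa hw'a)⟩
  rcases h with h | h
  · exact deleteVerts_le.2 h
  · rw [subgraphOfAdj_adj] at h
    grind

theorem IsMatching.exists_ncard_edgeSet_eq_add_one [Finite V] {M : G.Subgraph} (hM : M.IsMatching)
    {u v : V} :
    (p : G.Walk u v) → p.IsPath → Odd p.length → u ∉ M.verts → v ∉ M.verts →
    (∀ (i : ℕ) (h : i < p.edges.length), p.edges[i] ∈ M.edgeSet ↔ i % 2 = 1) →
    ∃ N : G.Subgraph, N.IsMatching ∧ N.edgeSet.ncard = M.edgeSet.ncard + 1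
  | .nil, _, hodd, _, _, _ => absurd hodd (by simp)
  | .cons h .nil, _, _, hu, hv, _ =>
    ⟨_, hM.sup_subgraphOfAdj h hu hv, ncard_edgeSet_sup_subgraphOfAdj h hu⟩
  | .cons (v := x) hux (.cons (v := x') _ p), hp, hodd, hu, hv, halt => by
    -- Trade the `M`-edge `xx'` for `ux`; the rest of the path is augmenting for the result.
    have hxx' : M.Adj x x' := (halt 1 (by simp)).2 rfl
    simp only [Walk.cons_isPath_iff, Walk.support_cons, List.mem_cons, not_or] at hp
    obtain ⟨⟨hp, hxp⟩, -, hup⟩ := hp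
    set M₁ := M.deleteVerts {x, x'} ⊔ G.subgraphOfAdj hux
    have hverts : ∀ w ∈ p.support, w ∈ M₁.verts → w ∈ M.verts \ {x, x'} := by
      rintro w hw (hw₁ | hw₁)
      · exact hw₁
      · rcases hw₁ with rfl | rfl
        exacts [absurd hw hup, absurd hw hxp]
    have hedges : ∀ e ∈ p.edges, e ∈ M₁.edgeSet ↔ e ∈ M.edgeSet := by
      intro e he
      induction e using Sym2.ind with
      | _ w w' =>
        have hw := p.fst_mem_support_of_mem_edges he
        have hw' := p.snd_mem_support_of_mem_edges he
        exact hM.deleteVerts_pair_sup_subgraphOfAdj_adj_iff hxx' hux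
          (ne_of_mem_of_not_mem hw hxp) (ne_of_mem_of_not_mem hw' hxp)
          (ne_of_mem_of_not_mem hw hup) (ne_of_mem_of_not_mem hw' hup)
    obtain ⟨N, hN, hNcard⟩ := (hM.deleteVerts_pair_sup_subgraphOfAdj hxx' hux hu
      ).exists_ncard_edgeSet_eq_add_one p hp (by simpa [Nat.odd_add_one] using hodd)
      (fun h => (hverts _ p.start_mem_support h).2 (.inr rfl))
      (fun h => hv (hverts _ p.end_mem_support h).1)
      (fun i h => (hedges _ (List.getElem_mem h)).trans ((halt (i + 2) (by simpa using h)).trans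
        (by simp)))
    rw [ncard_edgeSet_deleteVerts_pair_sup_subgraphOfAdj hM hxx' hux hu] at hNcard
    exact ⟨N, hN, hNcard⟩

theorem IsMatching.mk_mem_edges_of_adj (hM : M.IsMatching) {u v : V}
    {p : G.Walk u v} (hcov : ∀ (i : ℕ) (h : i < p.edges.length), i % 2 = 0 → p.edges[i] ∈ M.edgeSet)
    {a b : V} (ha : a ∈ p.support) (hav : a ≠ v) (hab : M.Adj a b) : s(a, b) ∈ p.edges := by
  obtain ⟨j, rfl, hj⟩ := Walk.mem_support_iff_exists_getVert.1 ha
  have hjL : j ≠ p.length := fun h => hav (h ▸ p.getVert_length)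
  rcases Nat.mod_two_eq_zero_or_one j with hj2 | hj2
  · have hjl : j < p.edges.length := by simp; omega
    have hedge := hcov j hjl hj2
    rw [Walk.getElem_edges] at hedge
    rw [hM.eq_of_adj_left hab hedge, ← Walk.getElem_edges hjl]
    exact List.getElem_mem hjl
  · obtain ⟨k, rfl⟩ : ∃ k, j = k + 1 := ⟨j - 1, by omega⟩
    have hkl : k < p.edges.length := by simp; omega
    have hedge := hcov k hkl (by omega)
    rw [Walk.getElem_edges] at hedge
    rw [hM.eq_of_adj_left hab hedge.symm, Sym2.eq_swap, ← Walk.getElem_edges hkl]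
    exact List.getElem_mem hkl

end Subgraph

namespace Walk

variable {M M' : G.Subgraph} {u v w x y z : V}

def AlternatesBetween (M M' : G.Subgraph) (p : G.Walk u v) : Prop :=
  ∀ (i : ℕ) (h : i < p.edges.length),
    (p.edges[i] ∈ M.edgeSet ↔ i % 2 = 0) ∧ (p.edges[i] ∈ M'.edgeSet ↔ i % 2 = 1)

theorem alternatesBetween_cons (h : G.Adj u w) (p : G.Walk w v) :
    (cons h p).AlternatesBetween M M' ↔ (M.Adj u w ∧ ¬M'.Adj u w) ∧ p.AlternatesBetween M' M := by
  constructor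
  · intro halt
    refine ⟨⟨(halt 0 (by simp)).1.2 rfl, fun h' => by simpa using (halt 0 (by simp)).2.1 h'⟩,
      fun i hi => ?_⟩
    have := halt (i + 1) (by simpa using hi)
    simp only [edges_cons, List.getElem_cons_succ, Nat.succ_mod_two_eq_zero_iff,
      Nat.succ_mod_two_eq_one_iff] at this
    exact this.symm
  · rintro ⟨⟨hM, hM'⟩, halt⟩ (_ | i) hi
    · simpa using ⟨hM, hM'⟩
    · have := halt i (by simpa using hi)
      simp only [edges_cons, List.getElem_cons_succ, Nat.succ_mod_two_eq_zero_iff,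
        Nat.succ_mod_two_eq_one_iff]
      exact this.symm

theorem AlternatesBetween.reverse {p : G.Walk u v} (halt : p.AlternatesBetween M M')
    (heven : Even p.length) : p.reverse.AlternatesBetween M' M := by
  intro i hi
  simp only [edges_reverse, List.getElem_reverse, List.length_reverse, length_edges] at hi ⊢
  rw [Nat.even_iff] at heven
  have hpar : (p.length - 1 - i) % 2 = 0 ↔ i % 2 = 1 := by omega
  have hpar' : (p.length - 1 - i) % 2 = 1 ↔ i % 2 = 0 := by omega
  rw [← hpar, ← hpar']
  exact (halt _ (by simp; omega)).symm

theorem AlternatesBetween.notMem_support_of_adj_start (hM : M.IsMatching) {p : G.Walk x v}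
    (hp : p.IsPath) (halt : p.AlternatesBetween M' M) (heven : Even p.length) (hxy : M.Adj x y) :
    y ∉ p.support := by
  intro hy
  have hyx : s(y, x) ∈ p.edges := by
    simpa using hM.mk_mem_edges_of_adj (fun i h hi => ((halt.reverse heven) i h).1.2 hi)
      (by simpa using hy) hxy.ne.symm hxy.symm
  cases p with
  | nil => simp at hyx
  | cons h q =>
    rw [alternatesBetween_cons] at halt
    rw [cons_isPath_iff] at hp
    rcases List.mem_cons.1 (edges_cons h q ▸ hyx) with he | he
    · rw [Sym2.eq_swap, Sym2.congr_right] at he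
      exact halt.1.2 (he ▸ hxy)
    · exact hp.2 (q.snd_mem_support_of_mem_edges he)

theorem AlternatesBetween.notMem_support_of_adj (hM' : M'.IsMatching) {p : G.Walk x v}
    (halt : p.AlternatesBetween M' M) (hv : v ∉ M'.verts) (hyz : M'.Adj y z) (hy : y ∉ p.support) :
    z ∉ p.support := fun hz =>
  hy <| p.snd_mem_support_of_mem_edges <| hM'.mk_mem_edges_of_adj
    (fun i h hi => (halt i h).1.2 hi) hz (fun h => hv (h ▸ hyz.snd_mem)) hyz.symm

theorem AlternatesBetween.exists_extend [Finite V] (hM : M.IsMatching) (hM' : M'.IsMatching)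
    (hmax : ∀ N : G.Subgraph, N.IsMatching → N.edgeSet.ncard ≤ M'.edgeSet.ncard)
    (hv : v ∉ M'.verts) {p : G.Walk x v} (hp : p.IsPath) (halt : p.AlternatesBetween M' M)
    (heven : Even p.length) (hx : x ∈ M.verts) :
    ∃ z, ∃ q : G.Walk z v, q.IsPath ∧ q.AlternatesBetween M' M ∧ q.length = p.length + 2 := by
  obtain ⟨y, hxy, -⟩ := hM hx
  have hy := halt.notMem_support_of_adj_start hM hp heven hxy
  have hyx : G.Adj y x := hxy.adj_sub.symm
  have hr : (cons hyx p).AlternatesBetween M M' := (alternatesBetween_cons _ _).2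
    ⟨⟨hxy.symm, fun h => halt.notMem_support_of_adj hM' hv h hy p.start_mem_support⟩, halt⟩
  by_cases hyM' : y ∈ M'.verts
  · obtain ⟨z, hyz, -⟩ := hM' hyM'
    have hz := halt.notMem_support_of_adj hM' hv hyz hy
    refine ⟨z, cons hyz.adj_sub.symm (cons hyx p), (hp.cons hy).cons ?_,
      (alternatesBetween_cons _ _).2 ⟨⟨hyz.symm, fun h => ?_⟩, hr⟩, by simp⟩
    · simp [hyz.ne.symm, hz]
    · exact hz (hM.eq_of_adj_right h hxy ▸ p.start_mem_support)
  · obtain ⟨N, hN, hcard⟩ := hM'.exists_ncard_edgeSet_eq_add_one (cons hyx p) (hp.cons hy)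
      (by simpa [Nat.odd_add_one] using heven) hyM' hv (fun i h => (hr i h).2)
    have := hmax N hN
    omega

end Walk
end SimpleGraph

theorem stmt_15_general {V : Type*} [Fintype V] (G : SimpleGraph V) (U : Set V)
    (M M' : G.Subgraph) (hM : M.IsMatching) (hM' : M'.IsMatching)
    (hM'max : ∀ N : G.Subgraph, N.IsMatching → N.edgeSet.ncard ≤ M'.edgeSet.ncard)
    (hU : U ⊆ M.verts) (v : V) (hv : v ∈ U) (hvuns : v ∉ M'.verts) :
    ∃ (w : V) (p : G.Walk v w), w ∉ U ∧ p.IsPath ∧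
      0 < p.length ∧ p.length % 2 = 0 ∧
      (∀ (i : ℕ) (h : i < p.edges.length),
        (p.edges[i]'h ∈ M'.edgeSet ↔ i % 2 = 1)) := by
  by_contra hno
  have hgrow : ∀ n, ∃ x ∈ U, ∃ q : G.Walk x v,
      q.IsPath ∧ q.AlternatesBetween M' M ∧ q.length = 2 * n := by
    intro n
    induction n with
    | zero => exact ⟨v, hv, .nil, .nil, by simp [SimpleGraph.Walk.AlternatesBetween], rfl⟩
    | succ n ih =>
      obtain ⟨x, hx, q, hq, halt, hlen⟩ := ih
      obtain ⟨z, q', hq', halt', hlen'⟩ :=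
        halt.exists_extend hM hM' hM'max hvuns hq ⟨n, by omega⟩ (hU hx)
      have heven : Even q'.length := ⟨n + 1, by omega⟩
      by_cases hz : z ∈ U
      · exact ⟨z, hz, q', hq', halt', by omega⟩
      · exact absurd ⟨z, q'.reverse, hz, hq'.reverse, by simp; omega, by simp; omega,
          fun i h => (halt'.reverse heven i h).2⟩ hno
  obtain ⟨x, -, q, hq, -, hlen⟩ := hgrow (Fintype.card V)
  have := hq.length_lt
  omega

theorem stmt_15 {V : Type*} [Fintype V] (G : SimpleGraph V) (U : Set V)
    (M M' : G.Subgraph) (hM : M.IsMatching) (hM' : M'.IsMatching)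
    (hMmax : ∀ N : G.Subgraph, N.IsMatching → N.edgeSet.ncard ≤ M.edgeSet.ncard)
    (hM'max : ∀ N : G.Subgraph, N.IsMatching → N.edgeSet.ncard ≤ M'.edgeSet.ncard)
    (hU : U ⊆ M.verts) (v : V) (hv : v ∈ U) (hvuns : v ∉ M'.verts) :
    ∃ (w : V) (p : G.Walk v w), w ∉ U ∧ p.IsPath ∧
      0 < p.length ∧ p.length % 2 = 0 ∧
      (∀ (i : ℕ) (h : i < p.edges.length),
        (p.edges[i]'h ∈ M'.edgeSet ↔ i % 2 = 1)) :=
  stmt_15_general G U M M' hM hM' hM'max hU v hv hvuns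
end

section
/- Let S be a finite set and F = {A_i : i ∈ I} a finite family of subsets of S such that each element of S appears in at most two members of F. Suppose for distinct i, j the intersection A_i ∩ A_j has at most one element. Construct a graph G on vertex set I with i adjacent to j iff A_i ∩ A_j ≠ ∅ (i ≠ j), and let U ⊆ I be the set of indices i such that every element of A_i lies in exactly two members of F. Then there exists C ⊆ S with |C ∩ A_i| = 1 for every i ∈ I if and only if G has a matching saturating U. -/
/-!
A transversal `C` picks one point `c i` of each `A i`. Indices with the same point are adjacent,
and since a point lies in at most two sets they pair up into a matching; it saturates `U`, because
for `i ∈ U` the point `c i` lies in a second set `A j`, whose chosen point must then be `c i`.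

Conversely, given a matching saturating `U`, pick for a matched pair `{i, j}` the unique point of
`A i ∩ A j`, and for an unmatched `i ∉ U` a point of `A i` lying in no other set. A chosen point of
`A j` lying in `A i` (`i ≠ j`) forces `i, j` to be matched to each other, so both chosen points lie
in `A i ∩ A j`, which has at most one element: every `A i` contains exactly one chosen point.
-/

open Finset

theorem Set.eq_or_eq_of_ncard_le_two {ι : Type*} {T : Set ι} (h : T.ncard ≤ 2) {i j k : ι}
    (hi : i ∈ T) (hj : j ∈ T) (hk : k ∈ T) (hij : i ≠ j) (hT : T.Finite := by toFinite_tac) :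
    k = i ∨ k = j := by
  by_contra! hne
  have := (Set.two_lt_ncard hT).mpr ⟨i, hi, j, hj, k, hk, hij, hne.1.symm, hne.2.symm⟩
  omega

theorem SimpleGraph.exists_isMatching_of_fiber {V β : Type*} {G : SimpleGraph V} (f : V → β)
    (hadj : ∀ x y, x ≠ y → f x = f y → G.Adj x y)
    (hfiber : ∀ x y z, x ≠ y → x ≠ z → f x = f y → f x = f z → y = z) :
    ∃ M : G.Subgraph, M.IsMatching ∧ M.verts = {x | ∃ y, x ≠ y ∧ f x = f y} := by
  refine ⟨{ verts := {x | ∃ y, x ≠ y ∧ f x = f y}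
            Adj := fun x y => x ≠ y ∧ f x = f y
            adj_sub := fun h => hadj _ _ h.1 h.2
            edge_vert := fun h => ⟨_, h⟩
            symm := ⟨fun _ _ h => ⟨h.1.symm, h.2.symm⟩⟩ }, ?_, rfl⟩
  rintro x ⟨y, hxy⟩
  exact ⟨y, hxy, fun z hxz => hfiber x z y hxz.1 hxy.1 hxz.2 hxy.2⟩

namespace SetFamily

variable {ι α : Type*} [DecidableEq α] {A : ι → Finset α}

variable (A) in
abbrev intersectionGraph : SimpleGraph ι :=
  SimpleGraph.fromRel fun i j => (A i ∩ A j).Nonempty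

theorem intersectionGraph_adj {i j : ι} :
    (intersectionGraph A).Adj i j ↔ i ≠ j ∧ (A i ∩ A j).Nonempty := by
  rw [SimpleGraph.fromRel_adj, inter_comm (A j), or_self]

variable (A) in
/-- The set `U` of the informal statement. -/
def fullyShared : Set ι :=
  {i | ∀ s ∈ A i, {j | s ∈ A j}.ncard = 2}

theorem exists_isMatching_of_transversal [Finite ι] (htwo : ∀ s, {i | s ∈ A i}.ncard ≤ 2)
    {C : Finset α} (hC : ∀ i, (C ∩ A i).card = 1) :
    ∃ M : (intersectionGraph A).Subgraph, M.IsMatching ∧ fullyShared A ⊆ M.verts := by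
  choose c hc using fun i => card_eq_one.mp (hC i)
  have hcC (i : ι) : c i ∈ C := (mem_inter.mp (by simp [hc] : c i ∈ C ∩ A i)).1
  have hcA (i : ι) : c i ∈ A i := (mem_inter.mp (by simp [hc] : c i ∈ C ∩ A i)).2
  have hc_of_mem {i : ι} {s : α} (hs : s ∈ C) (hsA : s ∈ A i) : s = c i := by
    simpa [hc] using mem_inter.mpr ⟨hs, hsA⟩
  obtain ⟨M, hM, hverts⟩ := SimpleGraph.exists_isMatching_of_fiber (G := intersectionGraph A) c
    (fun x y hxy hcxy => intersectionGraph_adj.mpr ⟨hxy, c x, mem_inter.mpr ⟨hcA x, hcxy ▸ hcA y⟩⟩)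
    (fun x y z hxy hxz hcxy hcxz =>
      ((Set.eq_or_eq_of_ncard_le_two (htwo (c x)) (hcA x) (hcxy ▸ hcA y) (hcxz ▸ hcA z)
        hxy).resolve_left hxz.symm).symm)
  refine ⟨M, hM, fun i hi => ?_⟩
  obtain ⟨j, hj, hji⟩ := Set.exists_ne_of_one_lt_ncard (hi (c i) (hcA i) ▸ one_lt_two) i
  exact hverts ▸ ⟨j, hji.symm, hc_of_mem (hcC i) hj⟩

theorem exists_mem_forall_mem_iff_adj [Finite ι] (htwo : ∀ s, {i | s ∈ A i}.ncard ≤ 2)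
    {M : (intersectionGraph A).Subgraph} (hM : M.IsMatching) (hU : fullyShared A ⊆ M.verts)
    (i : ι) : ∃ s ∈ A i, ∀ j, j ≠ i → (s ∈ A j ↔ M.Adj i j) := by
  by_cases hi : i ∈ M.verts
  · obtain ⟨j, hij, -⟩ := hM hi
    obtain ⟨hne, s, hs⟩ := intersectionGraph_adj.mp (M.adj_sub hij)
    obtain ⟨hsi, hsj⟩ := mem_inter.mp hs
    refine ⟨s, hsi, fun k hki => ⟨fun hsk => ?_, fun hik => hM.eq_of_adj_left hij hik ▸ hsj⟩⟩
    obtain rfl := (Set.eq_or_eq_of_ncard_le_two (htwo s) hsi hsj hsk hne).resolve_left hki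
    exact hij
  · have : i ∉ fullyShared A := fun h => hi (hU h)
    simp only [fullyShared, Set.mem_ofPred_eq, not_forall] at this
    obtain ⟨s, hsi, hs⟩ := this
    have hprivate := (Set.ncard_le_one (s := {j | s ∈ A j})).mp (by have := htwo s; omega)
    exact ⟨s, hsi, fun j hji => ⟨fun hsj => absurd (hprivate j hsj i hsi) hji,
      fun hij => absurd hij.fst_mem hi⟩⟩

theorem card_image_inter_eq_one [Fintype ι] (hone : ∀ i j, i ≠ j → (A i ∩ A j).card ≤ 1)
    {σ : ι → α} (hσ : ∀ i, σ i ∈ A i) (hsymm : ∀ i j, i ≠ j → σ i ∈ A j → σ j ∈ A i) (i : ι) :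
    (univ.image σ ∩ A i).card = 1 := by
  refine card_eq_one.mpr ⟨σ i, ext fun s => ?_⟩
  simp only [mem_inter, mem_image, mem_univ, true_and, mem_singleton]
  refine ⟨fun ⟨⟨j, hj⟩, hsi⟩ => ?_, fun hs => ⟨⟨i, hs.symm⟩, hs ▸ hσ i⟩⟩
  subst hj
  by_cases hji : j = i
  · rw [hji]
  exact card_le_one.mp (hone i j (Ne.symm hji)) _ (mem_inter.mpr ⟨hsi, hσ j⟩) _
    (mem_inter.mpr ⟨hσ i, hsymm j i hji hsi⟩)

theorem exists_transversal_of_isMatching [Fintype ι] (htwo : ∀ s, {i | s ∈ A i}.ncard ≤ 2)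
    (hone : ∀ i j, i ≠ j → (A i ∩ A j).card ≤ 1)
    {M : (intersectionGraph A).Subgraph} (hM : M.IsMatching) (hU : fullyShared A ⊆ M.verts) :
    ∃ C : Finset α, ∀ i, (C ∩ A i).card = 1 := by
  choose σ hσA hσ using exists_mem_forall_mem_iff_adj htwo hM hU
  exact ⟨univ.image σ, card_image_inter_eq_one hone hσA fun i j hij hσi =>
    (hσ j i hij).mpr ((hσ i j hij.symm).mp hσi).symm⟩

end SetFamily

theorem stmt_16_general {I S : Type*} [Fintype I] [DecidableEq S]
    (A : I → Finset S)
    (htwo : ∀ s : S, ({i : I | s ∈ A i}).ncard ≤ 2)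
    (hone : ∀ i j : I, i ≠ j → (A i ∩ A j).card ≤ 1) :
    (∃ C : Finset S, ∀ i : I, (C ∩ A i).card = 1) ↔
    (∃ M : (SimpleGraph.fromRel (fun i j : I => (A i ∩ A j).Nonempty)).Subgraph,
      M.IsMatching ∧
      {i : I | ∀ s ∈ A i, ({j : I | s ∈ A j}).ncard = 2} ⊆ M.verts) :=
  ⟨fun ⟨_, hC⟩ => SetFamily.exists_isMatching_of_transversal htwo hC,
    fun ⟨_, hM, hU⟩ => SetFamily.exists_transversal_of_isMatching htwo hone hM hU⟩

theorem stmt_16 {I S : Type*} [Fintype I] [Fintype S] [DecidableEq I] [DecidableEq S]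
    (A : I → Finset S)
    (hne : ∀ i : I, (A i).Nonempty)
    (htwo : ∀ s : S, ({i : I | s ∈ A i}).ncard ≤ 2)
    (hone : ∀ i j : I, i ≠ j → (A i ∩ A j).card ≤ 1) :
    (∃ C : Finset S, ∀ i : I, (C ∩ A i).card = 1) ↔
    (∃ M : (SimpleGraph.fromRel (fun i j : I => (A i ∩ A j).Nonempty)).Subgraph,
      M.IsMatching ∧
      {i : I | ∀ s ∈ A i, ({j : I | s ∈ A j}).ncard = 2} ⊆ M.verts) :=
  stmt_16_general A htwo hone
end

section
/- Let G be a graph in which every vertex belongs to at most one triangle, admitting a feasible complete coloring in which the set of precolored black vertices is an independent set with pairwise distance at least 3. If x, u1, u2, w1, w2, y induce the graph F3 in G (x adjacent to w1 and w2; w1 adjacent to u1; w2 adjacent to u2; u1, u2, y forming a triangle; no other adjacencies among these six vertices), then x is black in the coloring. -/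
theorem stmt_19 {V : Type*} (G : SimpleGraph V) (c : V → Bool)
    (hfeas : FeasibleColoring G c)
    (honeTri : ∀ v x y x' y' : V,
      G.Adj v x → G.Adj v y → G.Adj x y →
      G.Adj v x' → G.Adj v y' → G.Adj x' y' →
      ({x, y} : Set V) = {x', y'})
    (B : Set V) (hBblack : ∀ v ∈ B, c v = true)
    (hBindep : ∀ u ∈ B, ∀ v ∈ B, ¬ G.Adj u v)
    (hBdist : ∀ u ∈ B, ∀ v ∈ B, u ≠ v → 3 ≤ G.dist u v)
    (x w1 w2 u1 u2 y : V)
    (hdistinct : List.Pairwise (· ≠ ·) [x, w1, w2, u1, u2, y])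
    (hxw1 : G.Adj x w1) (hxw2 : G.Adj x w2)
    (hw1u1 : G.Adj w1 u1) (hw2u2 : G.Adj w2 u2)
    (hu1u2 : G.Adj u1 u2) (hu1y : G.Adj u1 y) (hu2y : G.Adj u2 y)
    (hxu1 : ¬ G.Adj x u1) (hxu2 : ¬ G.Adj x u2) (hxy : ¬ G.Adj x y)
    (hw1w2 : ¬ G.Adj w1 w2) (hw1u2 : ¬ G.Adj w1 u2) (hw1y : ¬ G.Adj w1 y)
    (hw2u1 : ¬ G.Adj w2 u1) (hw2y : ¬ G.Adj w2 y) :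
    c x = true := by
  simp only [List.pairwise_cons, List.mem_cons] at hdistinct
  obtain ⟨h1, h2⟩ := hfeas
  by_contra hx
  have hw1 : c w1 = true := (h1 x w1 hxw1).resolve_left hx
  have hw2 : c w2 = true := (h1 x w2 hxw2).resolve_left hx
  rcases h1 u1 u2 hu1u2 with hu1 | hu2
  · obtain ⟨b, _, huniq⟩ := h2 u1 hu1
    have e1 : w1 = b := huniq w1 ⟨hw1u1.symm, hw1⟩
    rcases h1 u2 y hu2y with hz | hz
    · exact (by aesop : w1 ≠ u2) (e1.trans (huniq u2 ⟨hu1u2, hz⟩).symm)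
    · exact (by aesop : w1 ≠ y) (e1.trans (huniq y ⟨hu1y, hz⟩).symm)
  · obtain ⟨b, _, huniq⟩ := h2 u2 hu2
    have e1 : w2 = b := huniq w2 ⟨hw2u2.symm, hw2⟩
    rcases h1 u1 y hu1y with hz | hz
    · exact (by aesop : w2 ≠ u1) (e1.trans (huniq u1 ⟨hu1u2.symm, hz⟩).symm)
    · exact (by aesop : w2 ≠ y) (e1.trans (huniq y ⟨hu2y, hz⟩).symm)
end
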